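/- Let m : (0, R] → [0, ∞) be nondecreasing, locally absolutely continuous, satisfying m'(ρ) ≥ √π · m(ρ)^{1/2} for almost every ρ ∈ (2R/3, R), and m(R) ≤ πR²/36. Then m(2R/3) = 0. -/
import Mathlib

open Set MeasureTheory intervalIntegral

set_option maxHeartbeats 1600000

/-- ODE comparison step for the density estimate: if `m : (0,R] → [0,∞)` is
nondecreasing, (locally) absolutely continuous (expressed via the fundamental
theorem of calculus on `[2R/3, R]`), satisfies `m' ≥ √π · m^{1/2}` a.e. on
`(2R/3, R)` and `m(R) ≤ π R² / 36`, then `m(2R/3) = 0`. -/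
theorem ode_comparison_density (R : ℝ) (hR : 0 < R) (m : ℝ → ℝ)
    (hnonneg : ∀ ρ ∈ Ioc 0 R, 0 ≤ m ρ)
    (hmono : MonotoneOn m (Ioc 0 R))
    (hac : ∀ a b : ℝ, 2 * R / 3 ≤ a → a ≤ b → b ≤ R →
      m b - m a = ∫ t in a..b, deriv m t)
    (hderiv : ∀ᵐ ρ, ρ ∈ Ioo (2 * R / 3) R →
      Real.sqrt Real.pi * Real.sqrt (m ρ) ≤ deriv m ρ)
    (hmR : m R ≤ Real.pi * R ^ 2 / 36) :
    m (2 * R / 3) = 0 := by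
  have hR3 : (0:ℝ) < 2 * R / 3 := by linarith
  have hmem0 : (2 * R / 3) ∈ Ioc (0:ℝ) R := ⟨hR3, by linarith⟩
  have hcnn : 0 ≤ m (2 * R / 3) := hnonneg _ hmem0
  by_contra hne
  have hc : 0 < m (2 * R / 3) := lt_of_le_of_ne hcnn (Ne.symm hne)
  -- constant case: if `m` is constant on `[2R/3, R]` we get a contradiction
  have hconst_case : m R ≠ m (2 * R / 3) ∨ True := Or.inr trivial
  have key_const : m R = m (2 * R / 3) → False := by
    intro hEq
    -- m is constant on Icc (2R/3) R, hence deriv m = 0 on the interior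
    have hconst : ∀ s ∈ Icc (2 * R / 3) R, m s = m (2 * R / 3) := by
      intro s hs
      have hs' : s ∈ Ioc (0:ℝ) R := ⟨lt_of_lt_of_le hR3 hs.1, hs.2⟩
      have h1 : m (2 * R / 3) ≤ m s := hmono hmem0 hs' hs.1
      have h2 : m s ≤ m R := hmono hs' ⟨hR, le_refl R⟩ hs.2
      linarith [hEq ▸ h2]
    have hd0 : ∀ t ∈ Ioo (2 * R / 3) R, deriv m t = 0 := by
      intro t ht
      have hev : m =ᶠ[nhds t] fun _ => m (2 * R / 3) := by
        filter_upwards [Ioo_mem_nhds ht.1 ht.2] with s hs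
        exact hconst s ⟨hs.1.le, hs.2.le⟩
      rw [hev.deriv_eq, deriv_const]
    -- find a point of Ioo satisfying the a.e. differential inequality
    have hpos : volume (Ioo (2 * R / 3) R) ≠ 0 := by
      rw [Real.volume_Ioo]
      simp only [ne_eq, ENNReal.ofReal_eq_zero, not_le]
      linarith
    have hres : ∀ᵐ ρ ∂(volume.restrict (Ioo (2 * R / 3) R)),
        Real.sqrt Real.pi * Real.sqrt (m ρ) ≤ deriv m ρ := by
      filter_upwards [ae_restrict_of_ae hderiv,
        ae_restrict_mem measurableSet_Ioo] with ρ h1 h2 using h1 h2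
    have hres2 : ∀ᵐ ρ ∂(volume.restrict (Ioo (2 * R / 3) R)),
        Real.sqrt Real.pi * Real.sqrt (m ρ) ≤ deriv m ρ ∧ ρ ∈ Ioo (2 * R / 3) R :=
      hres.and (ae_restrict_mem measurableSet_Ioo)
    have hNB : (ae (volume.restrict (Ioo (2 * R / 3) R))).NeBot := by
      rw [ae_neBot]
      simpa [Measure.restrict_eq_zero] using hpos
    obtain ⟨t, ht1, ht2⟩ := hres2.exists
    rw [hd0 t ht2] at ht1
    have hmt : m t = m (2 * R / 3) := hconst t ⟨ht2.1.le, ht2.2.le⟩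
    have hπ : 0 < Real.sqrt Real.pi := Real.sqrt_pos.2 Real.pi_pos
    have : Real.sqrt (m t) ≤ 0 := by
      by_contra h
      push_neg at h
      nlinarith
    have : Real.sqrt (m t) = 0 := le_antisymm this (Real.sqrt_nonneg _)
    rw [hmt] at this
    have := Real.sqrt_eq_zero hcnn |>.1 this
    linarith
  by_cases hint : IntervalIntegrable (deriv m) volume (2 * R / 3) R
  swap
  · -- non-integrable: interval integral is 0, so m R = m (2R/3)
    apply key_const
    have h0 : (∫ t in (2 * R / 3)..R, deriv m t) = 0 := integral_undef hint
    have := hac (2 * R / 3) R le_rfl (by linarith) le_rfl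
    linarith [h0 ▸ this]
  -- integrable case: discrete Grönwall iteration
  obtain ⟨M, hMdef⟩ : ∃ x : ℝ, x = Real.sqrt Real.pi * R / 6 := ⟨_, rfl⟩
  have hπ : 0 < Real.sqrt Real.pi := Real.sqrt_pos.2 Real.pi_pos
  have hM : 0 < M := by rw [hMdef]; positivity
  obtain ⟨s, hsdef⟩ : ∃ x : ℝ, x = Real.sqrt (m (2 * R / 3)) := ⟨_, rfl⟩
  have hs : 0 < s := hsdef ▸ Real.sqrt_pos.2 hc
  obtain ⟨n, hn⟩ := exists_nat_gt (max (M ^ 2 / (2 * m (2 * R / 3))) (M / (2 * s)))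
  have hn1 : M ^ 2 / (2 * m (2 * R / 3)) < n := lt_of_le_of_lt (le_max_left _ _) hn
  have hn2 : M / (2 * s) < n := lt_of_le_of_lt (le_max_right _ _) hn
  have hn0 : 0 < (n:ℝ) := lt_trans (by positivity) hn2
  obtain ⟨h, hhdef⟩ : ∃ x : ℝ, x = R / (3 * (n:ℝ)) := ⟨_, rfl⟩
  have hh : 0 < h := by rw [hhdef]; positivity
  obtain ⟨t, htdef⟩ : ∃ x : ℝ, x = M / (n:ℝ) := ⟨_, rfl⟩
  have ht : 0 < t := by rw [htdef]; positivity
  have hts : t ≤ 2 * s := by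
    rw [htdef, div_le_iff₀ hn0]
    calc M = (M / (2*s)) * (2*s) := by field_simp
    _ ≤ n * (2*s) := by
      apply mul_le_mul_of_nonneg_right hn2.le (by positivity)
    _ = 2 * s * n := by ring
  obtain ⟨d, hddef⟩ : ∃ x : ℝ, x = t - t ^ 2 / (2 * s) := ⟨_, rfl⟩
  have hd0 : 0 ≤ d := by
    rw [hddef]
    have : t ^ 2 / (2 * s) ≤ t := by
      rw [div_le_iff₀ (by positivity)]
      nlinarith
    linarith
  have hdt : d ≤ t := by
    rw [hddef]
    have : 0 ≤ t ^ 2 / (2 * s) := by positivity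
    linarith
  -- the one-step integral inequality
  have step : ∀ a b : ℝ, 2 * R / 3 ≤ a → a ≤ b → b ≤ R →
      m a + Real.sqrt Real.pi * Real.sqrt (m a) * (b - a) ≤ m b := by
    intro a b ha hab hbR
    have hfi : IntervalIntegrable (deriv m) volume a b := by
      apply hint.mono_set
      rw [uIcc_of_le hab, uIcc_of_le (by linarith : 2 * R / 3 ≤ R)]
      exact Icc_subset_Icc ha hbR
    have hIoo : ∀ᵐ ρ ∂(volume.restrict (Icc a b)), ρ ∈ Ioo a b := by
      have h0 : volume ({a, b} : Set ℝ) = 0 := ((Set.finite_singleton b).insert a).measure_zero volume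
      have h1 : ∀ᵐ ρ ∂(volume : Measure ℝ), ρ ∉ ({a, b} : Set ℝ) :=
        measure_eq_zero_iff_ae_notMem.mp h0
      filter_upwards [ae_restrict_mem measurableSet_Icc, ae_restrict_of_ae h1]
        with ρ hρ hρ'
      simp only [mem_insert_iff, mem_singleton_iff, not_or] at hρ'
      exact ⟨lt_of_le_of_ne hρ.1 (Ne.symm hρ'.1), lt_of_le_of_ne hρ.2 hρ'.2⟩
    have hae : (fun _ => Real.sqrt Real.pi * Real.sqrt (m a))
        ≤ᵐ[volume.restrict (Icc a b)] deriv m := by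
      filter_upwards [hIoo, ae_restrict_of_ae hderiv] with ρ hρ hdρ
      have hρIoo : ρ ∈ Ioo (2 * R / 3) R :=
        ⟨lt_of_le_of_lt ha hρ.1, lt_of_lt_of_le hρ.2 hbR⟩
      have hmam : m a ≤ m ρ := by
        apply hmono ⟨lt_of_lt_of_le hR3 ha, by linarith⟩
          ⟨lt_trans hR3 hρIoo.1, hρIoo.2.le⟩ hρ.1.le
      calc Real.sqrt Real.pi * Real.sqrt (m a)
          ≤ Real.sqrt Real.pi * Real.sqrt (m ρ) := by
            apply mul_le_mul_of_nonneg_left (Real.sqrt_le_sqrt hmam) hπ.le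
        _ ≤ deriv m ρ := hdρ hρIoo
    have hcomp := integral_mono_ae_restrict hab
      (_root_.intervalIntegrable_const (c := Real.sqrt Real.pi * Real.sqrt (m a))) hfi hae
    rw [intervalIntegral.integral_const] at hcomp
    have hFTC := hac a b ha hab hbR
    rw [← hFTC] at hcomp
    simp only [smul_eq_mul] at hcomp
    nlinarith
  -- the grid and the induction
  have hgrid : ∀ i : ℕ, i ≤ n → s + i * d ≤ Real.sqrt (m (2 * R / 3 + i * h)) := by
    intro i
    induction i with
    | zero => intro _; rw [hsdef]; push_cast; simp
    | succ i ih =>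
      intro hi1
      have hii : i ≤ n := le_of_lt (Nat.lt_of_succ_le hi1)
      have IH := ih hii
      have hin : (i:ℝ) + 1 ≤ (n:ℝ) := by exact_mod_cast hi1
      obtain ⟨A, hAdef⟩ : ∃ x : ℝ, x = 2 * R / 3 + (i:ℝ) * h := ⟨_, rfl⟩
      rw [← hAdef] at IH
      obtain ⟨B, hBdef⟩ : ∃ x : ℝ, x = 2 * R / 3 + ((i:ℝ)+1) * h := ⟨_, rfl⟩
      have hBA : B = A + h := by rw [hAdef, hBdef]; push_cast; ring
      have hA0 : 2 * R / 3 ≤ A := by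
        rw [hAdef]; have : (0:ℝ) ≤ i * h := by positivity
        linarith
      have hBR : B ≤ R := by
        rw [hBdef, hhdef]
        have h1 : ((i:ℝ)+1) * (R / (3 * n)) ≤ n * (R / (3 * n)) := by
          apply mul_le_mul_of_nonneg_right hin (by positivity)
        have hnn : (n:ℝ) * (R / (3 * n)) = R / 3 := by field_simp
        rw [hnn] at h1
        linarith
      have hAB : A ≤ B := by rw [hBA]; linarith
      have hstep := step A B hA0 hAB hBR
      have hyi : 0 ≤ m A := hnonneg _ ⟨lt_of_lt_of_le hR3 hA0, le_trans hAB hBR⟩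
      obtain ⟨y, hydef⟩ : ∃ x : ℝ, x = Real.sqrt (m A) := ⟨_, rfl⟩
      have hys : s ≤ y := by
        rw [hydef]
        have : (0:ℝ) ≤ i * d := by positivity
        linarith
      have h2t : Real.sqrt Real.pi * h = 2 * t := by
        rw [hhdef, htdef, hMdef]; field_simp; ring
      have hmy : m A = y ^ 2 := by rw [hydef]; exact (Real.sq_sqrt hyi).symm
      have hkey : (y + d) ^ 2 ≤ m B := by
        have h1 : m A + 2 * t * y ≤ m B := by
          have hBmA : B - A = h := by rw [hBA]; ring
          have hst : m A + Real.sqrt Real.pi * y * (B - A) ≤ m B := by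
            rw [← hydef] at hstep; exact hstep
          rw [hBmA] at hst
          have he : Real.sqrt Real.pi * y * h = 2 * t * y := by rw [← h2t]; ring
          linarith [he ▸ hst]
        have h2sd : 2 * s * d = 2 * s * t - t ^ 2 := by
          rw [hddef]; field_simp
        have h2 : (y + d) ^ 2 ≤ y ^ 2 + 2 * t * y := by
          nlinarith [h2sd, mul_nonneg (sub_nonneg.2 hys) (sub_nonneg.2 hdt),
            mul_nonneg (sub_nonneg.2 hdt) (by linarith : (0:ℝ) ≤ t + d), hd0, ht.le]
        linarith [hmy ▸ h2]
      have hfinstep : y + d ≤ Real.sqrt (m B) := by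
        have hyd0 : 0 ≤ y + d := by linarith
        calc y + d = Real.sqrt ((y+d)^2) := (Real.sqrt_sq hyd0).symm
          _ ≤ Real.sqrt (m B) := Real.sqrt_le_sqrt hkey
      have hgoal : (2 * R / 3 + ((i+1 : ℕ):ℝ) * h) = B := by
        rw [hBdef]; push_cast; ring
      rw [hgoal]
      push_cast
      have IH' : s + (i:ℝ) * d ≤ y := by rw [hydef]; exact IH
      linarith [hfinstep]
  -- conclusion
  have haR : 2 * R / 3 + n * h = R := by
    rw [hhdef]; field_simp; ring
  have hfin := hgrid n le_rfl
  rw [haR] at hfin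
  have hMsq : M ^ 2 = Real.pi * R ^ 2 / 36 := by
    rw [hMdef, div_pow, mul_pow, Real.sq_sqrt Real.pi_pos.le]
    norm_num
  have hMR : Real.sqrt (m R) ≤ M := by
    have h1 : m R ≤ M ^ 2 := by rw [hMsq]; exact hmR
    calc Real.sqrt (m R) ≤ Real.sqrt (M ^ 2) := Real.sqrt_le_sqrt h1
      _ = M := Real.sqrt_sq hM.le
  have hnne : ((n:ℝ)) ≠ 0 := hn0.ne'
  have hnt : (n:ℝ) * t = M := by rw [htdef]; field_simp
  have h2sd : 2 * s * d = 2 * s * t - t ^ 2 := by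
    rw [hddef]; field_simp
  have key : 2 * s * ((n:ℝ) * d) = 2 * s * M - M * t := by
    have e1 : 2 * s * ((n:ℝ) * d) = (n:ℝ) * (2 * s * d) := by ring
    rw [e1, h2sd]
    have e2 : (n:ℝ) * (2 * s * t - t ^ 2) = 2 * s * ((n:ℝ) * t) - ((n:ℝ) * t) * t := by
      ring
    rw [e2, hnt]
  have hs2 : s ^ 2 = m (2 * R / 3) := by rw [hsdef]; exact Real.sq_sqrt hc.le
  have hfin2 : s + (n:ℝ) * d ≤ M := le_trans hfin hMR
  have hmul : 2 * s ^ 2 ≤ M * t := by nlinarith [mul_le_mul_of_nonneg_left hfin2 (by positivity : (0:ℝ) ≤ 2 * s), key]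
  have hMt : M * t * n = M ^ 2 := by rw [htdef]; field_simp
  rw [div_lt_iff₀ (by positivity : (0:ℝ) < 2 * m (2 * R / 3))] at hn1
  nlinarith [mul_le_mul_of_nonneg_right hmul hn0.le, hMt, hs2]
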